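/- Let X = X₁ + X₂ where X₁ ~ Bernoulli(p) and X₂ ~ N(0, σ²) are independent. Then |φ_X(d)|² = (p² + (1−p)² + 2p(1−p)cos(d)) · exp(−σ²d²), and X is reasonable with respect to cos if and only if σ²d(p² + (1−p)² + 2p(1−p)cos d) + p(1−p) sin d ≥ 0 for all d ≥ 0. -/

import Mathlib

/-!
By independence `φ_X = φ_{X₁} φ_{X₂}`, where `φ_{X₁}(t) = p e^{it} + 1 - p` and
`|φ_{X₂}(t)| = e^{-σ²t²/2}`; this gives the formula for `|φ_X|²`. Since
`∫ cos (a + d X) = Re (e^{ia} φ_X(d))`, the supremum over the phase `a` is `|φ_X(d)|`, so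
reasonableness means that `|φ_X|²` is antitone on `d > 0`, i.e. that its derivative
`-2 e^{-σ²d²} (σ²d (p² + (1-p)² + 2p(1-p) cos d) + p(1-p) sin d)` is nonpositive there.
-/

open MeasureTheory ProbabilityTheory Set BoundedContinuousFunction

open Complex in
lemma ciSup_re_exp_mul_I_mul (z : ℂ) : ⨆ a : ℝ, (exp (a * I) * z).re = ‖z‖ := by
  have hle : ∀ a : ℝ, (exp (a * I) * z).re ≤ ‖z‖ := fun a =>
    (re_le_norm _).trans_eq (by rw [norm_mul, norm_exp_ofReal_mul_I, one_mul])
  refine le_antisymm (ciSup_le hle) (le_ciSup_of_le ⟨‖z‖, forall_mem_range.2 hle⟩ (-arg z) ?_)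
  have : exp (↑(-arg z) * I) * (‖z‖ * exp (arg z * I)) = ‖z‖ := by
    rw [mul_left_comm, ← exp_add, ofReal_neg, neg_mul, neg_add_cancel, exp_zero, mul_one]
  rw [norm_mul_exp_arg_mul_I] at this
  rw [this, ofReal_re]

section charFun

variable {E : Type*} [NormedAddCommGroup E] [InnerProductSpace ℝ E] [MeasurableSpace E]

lemma charFun_add_measure [OpensMeasurableSpace E] (μ ν : Measure E) [IsFiniteMeasure μ]
    [IsFiniteMeasure ν] (t : E) : charFun (μ + ν) t = charFun μ t + charFun ν t := by
  simp only [charFun_eq_integral_innerProbChar]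
  exact integral_add_measure ((innerProbChar t).integrable μ) ((innerProbChar t).integrable ν)

lemma charFun_smul_measure (μ : Measure E) (c : ENNReal) (t : E) :
    charFun (c • μ) t = c.toReal * charFun μ t := by
  rw [charFun_apply, integral_smul_measure, Complex.real_smul, charFun_apply]

end charFun

open Complex in
lemma charFun_bernoulli {p : ℝ} (hp0 : 0 ≤ p) (hp1 : p ≤ 1) (t : ℝ) :
    charFun (ENNReal.ofReal p • Measure.dirac (1 : ℝ) +
      ENNReal.ofReal (1 - p) • Measure.dirac (0 : ℝ)) t = p * exp (t * I) + (1 - p) := by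
  have := (Measure.dirac (1 : ℝ)).smul_finite (ENNReal.ofReal_ne_top (r := p))
  have := (Measure.dirac (0 : ℝ)).smul_finite (ENNReal.ofReal_ne_top (r := 1 - p))
  rw [charFun_add_measure, charFun_smul_measure, charFun_smul_measure, charFun_dirac,
    charFun_dirac, ENNReal.toReal_ofReal hp0, ENNReal.toReal_ofReal (sub_nonneg.2 hp1)]
  simp

open Complex in
lemma sq_norm_ofReal_mul_exp_add_one_sub (p t : ℝ) :
    ‖(p : ℂ) * exp (t * I) + (1 - p)‖ ^ 2 =
      p ^ 2 + (1 - p) ^ 2 + 2 * p * (1 - p) * Real.cos t := by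
  rw [Complex.sq_norm, normSq_apply]
  simp only [add_re, mul_re, ofReal_re, exp_ofReal_mul_I_re, ofReal_im, exp_ofReal_mul_I_im,
    zero_mul, sub_zero, sub_re, one_re, add_im, mul_im, add_zero, sub_im, one_im, sub_self]
  nlinarith [Real.sin_sq_add_cos_sq t]

lemma norm_charFun_gaussianReal (μ : ℝ) (v : NNReal) (t : ℝ) :
    ‖charFun (gaussianReal μ v) t‖ = Real.exp (-(v * t ^ 2 / 2)) := by
  rw [charFun_gaussianReal, Complex.norm_exp]
  congr 1
  simp [← Complex.ofReal_pow]

lemma integral_cos_add_mul_eq_re {μ : Measure ℝ} [IsFiniteMeasure μ] (a t : ℝ) :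
    ∫ x, Real.cos (a + t * x) ∂μ = (Complex.exp (a * Complex.I) * charFun μ t).re := by
  rw [charFun_eq_integral_innerProbChar, ← integral_const_mul, ← RCLike.re_eq_complex_re,
    ← integral_re (((innerProbChar t).integrable μ).const_mul _)]
  congr 1 with x
  rw [innerProbChar_apply, ← Complex.exp_add, RCLike.re_eq_complex_re, ← add_mul]
  norm_cast
  rw [Complex.exp_ofReal_mul_I_re]
  simp

lemma iSup_integral_cos_add_mul_eq_norm_charFun {μ : Measure ℝ} [IsFiniteMeasure μ] (t : ℝ) :
    ⨆ a : ℝ, ∫ x, Real.cos (a + t * x) ∂μ = ‖charFun μ t‖ := by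
  simp only [integral_cos_add_mul_eq_re, ciSup_re_exp_mul_I_mul]

lemma antitoneOn_iff_forall_hasDerivAt_nonpos {s : Set ℝ} (hs : IsOpen s) (hsc : Convex ℝ s)
    {f f' : ℝ → ℝ} (hf : ∀ x ∈ s, HasDerivAt f (f' x) x) :
    AntitoneOn f s ↔ ∀ x ∈ s, f' x ≤ 0 := by
  refine ⟨fun h x hx => ?_, fun h => ?_⟩
  · rw [← (hf x hx).deriv, ← derivWithin_of_isOpen hs hx]
    exact h.derivWithin_nonpos
  · have hdiff : DifferentiableOn ℝ f s := fun x hx =>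
      (hf x hx).differentiableAt.differentiableWithinAt
    refine antitoneOn_of_deriv_nonpos hsc hdiff.continuousOn (by rwa [hs.interior_eq]) ?_
    rw [hs.interior_eq]
    exact fun x hx => (hf x hx).deriv ▸ h x hx

lemma antitoneOn_iff_antitoneOn_sq_of_nonneg {α : Type*} [Preorder α] {f : α → ℝ} {s : Set α}
    (hf : ∀ x ∈ s, 0 ≤ f x) : AntitoneOn f s ↔ AntitoneOn (fun x => f x ^ 2) s := by
  refine forall₂_congr fun x hx => forall₂_congr fun y hy => imp_congr_right fun _ => ?_
  exact (pow_le_pow_iff_left₀ (hf y hy) (hf x hx) two_ne_zero).symm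

lemma hasDerivAt_cos_mul_exp_neg_sq (p v x : ℝ) :
    HasDerivAt
      (fun d => (p ^ 2 + (1 - p) ^ 2 + 2 * p * (1 - p) * Real.cos d) * Real.exp (-v * d ^ 2))
      (-2 * Real.exp (-v * x ^ 2) * (v * x * (p ^ 2 + (1 - p) ^ 2 + 2 * p * (1 - p) * Real.cos x) +
        p * (1 - p) * Real.sin x)) x := by
  have hc := ((Real.hasDerivAt_cos x).const_mul (2 * p * (1 - p))).const_add (p ^ 2 + (1 - p) ^ 2)
  have hq : HasDerivAt (fun d => -v * d ^ 2) (-v * (2 * x)) x := by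
    simpa using (hasDerivAt_pow 2 x).const_mul (-v)
  exact (hc.mul hq.exp).congr_deriv (by ring)

lemma antitoneOn_Ioi_cos_mul_exp_neg_sq_iff (p v : ℝ) :
    AntitoneOn
        (fun d => (p ^ 2 + (1 - p) ^ 2 + 2 * p * (1 - p) * Real.cos d) * Real.exp (-v * d ^ 2))
        (Ioi 0) ↔
      ∀ d : ℝ, 0 ≤ d →
        0 ≤ v * d * (p ^ 2 + (1 - p) ^ 2 + 2 * p * (1 - p) * Real.cos d) +
          p * (1 - p) * Real.sin d := by
  rw [antitoneOn_iff_forall_hasDerivAt_nonpos isOpen_Ioi (convex_Ioi 0)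
    (fun x _ => hasDerivAt_cos_mul_exp_neg_sq p v x)]
  refine ⟨fun h d hd => ?_, fun h d hd => ?_⟩
  · rcases hd.eq_or_lt with rfl | hd
    · simp
    · nlinarith [h d hd, Real.exp_pos (-v * d ^ 2)]
  · nlinarith [h d (le_of_lt hd), Real.exp_pos (-v * d ^ 2)]

theorem stmt11_general {Ω : Type*} [MeasurableSpace Ω] (P : Measure Ω) [IsProbabilityMeasure P]
    (X₁ X₂ : Ω → ℝ) (hX₁ : Measurable X₁) (hX₂ : Measurable X₂)
    (hindep : IndepFun X₁ X₂ P)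
    (p : ℝ) (hp0 : 0 ≤ p) (hp1 : p ≤ 1)
    (hBer : P.map X₁ = ENNReal.ofReal p • Measure.dirac (1 : ℝ) +
      ENNReal.ofReal (1 - p) • Measure.dirac (0 : ℝ))
    (σ : NNReal)
    (hGauss : P.map X₂ = gaussianReal 0 (σ ^ 2))
    (X : Ω → ℝ) (hXdef : X = X₁ + X₂)
    (φ : ℝ → ℂ) (hφ : ∀ t : ℝ, φ t = ∫ ω, Complex.exp (Complex.I * (t * X ω)) ∂P) :
    (∀ d : ℝ, ‖φ d‖ ^ 2 =
        (p ^ 2 + (1 - p) ^ 2 + 2 * p * (1 - p) * Real.cos d) *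
          Real.exp (-(σ : ℝ) ^ 2 * d ^ 2)) ∧
    (AntitoneOn (fun d : ℝ => ⨆ a : ℝ, ∫ ω, Real.cos (a + d * X ω) ∂P) (Ioi 0) ↔
      ∀ d : ℝ, 0 ≤ d →
        0 ≤ (σ : ℝ) ^ 2 * d * (p ^ 2 + (1 - p) ^ 2 + 2 * p * (1 - p) * Real.cos d) +
          p * (1 - p) * Real.sin d) := by
  have hX : Measurable X := hXdef ▸ hX₁.add hX₂
  have hφX : φ = charFun (P.map X) := by
    funext t
    rw [hφ, charFun_apply_real, integral_map hX.aemeasurable (by fun_prop)]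
    simp_rw [mul_comm Complex.I]
  have hnorm : ∀ d : ℝ, ‖φ d‖ ^ 2 = (p ^ 2 + (1 - p) ^ 2 + 2 * p * (1 - p) * Real.cos d) *
      Real.exp (-(σ : ℝ) ^ 2 * d ^ 2) := by
    intro d
    rw [hφX, hXdef, hindep.charFun_map_add_eq_mul hX₁.aemeasurable hX₂.aemeasurable, Pi.mul_apply,
      hBer, hGauss, charFun_bernoulli hp0 hp1, norm_mul, mul_pow,
      sq_norm_ofReal_mul_exp_add_one_sub, norm_charFun_gaussianReal, ← Real.exp_nat_mul]
    push_cast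
    ring_nf
  have hsup : (fun d : ℝ => ⨆ a : ℝ, ∫ ω, Real.cos (a + d * X ω) ∂P) = fun d => ‖φ d‖ := by
    funext d
    rw [hφX, ← iSup_integral_cos_add_mul_eq_norm_charFun]
    congr with a
    exact (integral_map hX.aemeasurable
      (by fun_prop : Continuous fun x : ℝ => Real.cos (a + d * x)).aestronglyMeasurable).symm
  refine ⟨hnorm, ?_⟩
  rw [hsup, antitoneOn_iff_antitoneOn_sq_of_nonneg (fun d _ => norm_nonneg (φ d))]
  simp_rw [hnorm]
  exact antitoneOn_Ioi_cos_mul_exp_neg_sq_iff p _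

/-- Let `X = X₁ + X₂` with `X₁ ~ Bernoulli(p)` and `X₂ ~ N(0,σ²)` independent.
Then `|φ_X(d)|² = (p² + (1−p)² + 2p(1−p)cos d)·exp(−σ²d²)`, and `X` is reasonable with
respect to `cos` iff `σ²d(p² + (1−p)² + 2p(1−p)cos d) + p(1−p) sin d ≥ 0` for all `d ≥ 0`. -/
theorem stmt11 {Ω : Type*} [MeasurableSpace Ω] (P : Measure Ω) [IsProbabilityMeasure P]
    (X₁ X₂ : Ω → ℝ) (hX₁ : Measurable X₁) (hX₂ : Measurable X₂)
    (hindep : IndepFun X₁ X₂ P)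
    (p : ℝ) (hp0 : 0 ≤ p) (hp1 : p ≤ 1)
    (hBer : P.map X₁ = ENNReal.ofReal p • Measure.dirac (1 : ℝ) +
      ENNReal.ofReal (1 - p) • Measure.dirac (0 : ℝ))
    (σ : NNReal) (hσ : 0 < σ)
    (hGauss : P.map X₂ = gaussianReal 0 (σ ^ 2))
    (X : Ω → ℝ) (hXdef : X = X₁ + X₂)
    (φ : ℝ → ℂ) (hφ : ∀ t : ℝ, φ t = ∫ ω, Complex.exp (Complex.I * (t * X ω)) ∂P) :
    (∀ d : ℝ, ‖φ d‖ ^ 2 =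
        (p ^ 2 + (1 - p) ^ 2 + 2 * p * (1 - p) * Real.cos d) *
          Real.exp (-(σ : ℝ) ^ 2 * d ^ 2)) ∧
    (AntitoneOn (fun d : ℝ => ⨆ a : ℝ, ∫ ω, Real.cos (a + d * X ω) ∂P) (Ioi 0) ↔
      ∀ d : ℝ, 0 ≤ d →
        0 ≤ (σ : ℝ) ^ 2 * d * (p ^ 2 + (1 - p) ^ 2 + 2 * p * (1 - p) * Real.cos d) +
          p * (1 - p) * Real.sin d) :=
  stmt11_general P X₁ X₂ hX₁ hX₂ hindep p hp0 hp1 hBer σ hGauss X hXdef φ hφ
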